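/- Let H be a hypergraph with an Euler family F and incidence graph G, let G_F be the subgraph of G corresponding to F, let C be an F-interchanging cycle in G, and let G1, …, Gk be all of the connected components of G_F that contain vertices of C. If for each i = 1, …, k the graph G_i minus the edges of C has at most one nontrivial connected component, then the subgraph of G_F Δ C induced by V(G1) ∪ … ∪ V(Gk) has at most one nontrivial connected component. -/

import Mathlib

open scoped Classical

/-- A hypergraph: a finite nonempty vertex type `V`, a finite index type `E` of
edges (so that repeated edges are allowed, as in a multiset of edges), and a map
`mem` assigning to each edge the finite set of its vertices. -/
structure Hypergraph' where
  V : Type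
  E : Type
  [fintypeV : Fintype V]
  [fintypeE : Fintype E]
  [nonemptyV : Nonempty V]
  mem : E → Finset V

attribute [instance] Hypergraph'.fintypeV Hypergraph'.fintypeE Hypergraph'.nonemptyV

namespace Hypergraph'

/-- A walk `v₀ e₁ v₁ e₂ … e_k v_k` in a hypergraph: consecutive anchors are
distinct and both lie in the connecting edge. -/
structure Walk (H : Hypergraph') where
  k : ℕ
  vtx : Fin (k + 1) → H.V
  edge : Fin k → H.E
  mem_left : ∀ i : Fin k, vtx i.castSucc ∈ H.mem (edge i)
  mem_right : ∀ i : Fin k, vtx i.succ ∈ H.mem (edge i)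
  ne : ∀ i : Fin k, vtx i.castSucc ≠ vtx i.succ

/-- A trail is a walk with pairwise distinct edges. -/
def Walk.IsTrail {H : Hypergraph'} (W : H.Walk) : Prop :=
  Function.Injective W.edge

/-- A closed walk: `v₀ = v_k` and `k ≥ 2`. -/
def Walk.IsClosed {H : Hypergraph'} (W : H.Walk) : Prop :=
  W.vtx 0 = W.vtx (Fin.last W.k) ∧ 2 ≤ W.k

def Walk.IsClosedTrail {H : Hypergraph'} (W : H.Walk) : Prop :=
  W.IsTrail ∧ W.IsClosed

/-- The anchors of a walk. -/
def Walk.anchors {H : Hypergraph'} (W : H.Walk) : Set H.V := Set.range W.vtx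

/-- The set of edges traversed by a walk. -/
def Walk.edgeSet {H : Hypergraph'} (W : H.Walk) : Set H.E := Set.range W.edge

/-- An Euler tour: a closed trail traversing every edge exactly once. -/
def IsEulerTour (H : Hypergraph') (W : H.Walk) : Prop :=
  W.IsClosedTrail ∧ Function.Bijective W.edge

def HasEulerTour (H : Hypergraph') : Prop := ∃ W : H.Walk, H.IsEulerTour W

/-- A hypergraph is eulerian if it has no edges or admits an Euler tour. -/
def IsEulerian (H : Hypergraph') : Prop := IsEmpty H.E ∨ H.HasEulerTour

/-- An Euler family: a set of pairwise anchor-disjoint, edge-disjoint closed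
trails jointly traversing every edge exactly once. -/
def IsEulerFamily (H : Hypergraph') (F : Set H.Walk) : Prop :=
  (∀ W ∈ F, W.IsClosedTrail) ∧
  (∀ W ∈ F, ∀ W' ∈ F, W ≠ W' →
    Disjoint W.anchors W'.anchors ∧ Disjoint W.edgeSet W'.edgeSet) ∧
  (∀ e : H.E, ∃ W ∈ F, e ∈ W.edgeSet)

/-- A hypergraph is quasi-eulerian if it has no edges or admits an Euler family. -/
def IsQuasiEulerian (H : Hypergraph') : Prop :=
  IsEmpty H.E ∨ ∃ F : Set H.Walk, H.IsEulerFamily F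

/-- A minimum Euler family: one with the fewest components. -/
def IsMinEulerFamily (H : Hypergraph') (F : Set H.Walk) : Prop :=
  H.IsEulerFamily F ∧ ∀ F' : Set H.Walk, H.IsEulerFamily F' → F.ncard ≤ F'.ncard

/-- `H` is `k`-uniform if each edge has exactly `k` vertices. -/
def IsUniform (H : Hypergraph') (k : ℕ) : Prop := ∀ e : H.E, (H.mem e).card = k

/-- A covering `k`-hypergraph (`k ≥ 3`): a nonempty `k`-uniform hypergraph in
which every `(k-1)`-subset of the vertex set lies in at least one edge. -/
def IsCovering (H : Hypergraph') (k : ℕ) : Prop :=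
  3 ≤ k ∧ Nonempty H.E ∧ H.IsUniform k ∧
    ∀ S : Finset H.V, S.card = k - 1 → ∃ e : H.E, S ⊆ H.mem e

/-- The incidence graph of a hypergraph: the bipartite simple graph on
`V ⊕ E` joining `v` and `e` exactly when `v ∈ e`. -/
def incidenceGraph (H : Hypergraph') : SimpleGraph (H.V ⊕ H.E) where
  Adj x y :=
    (∃ v e, x = Sum.inl v ∧ y = Sum.inr e ∧ v ∈ H.mem e) ∨
    (∃ v e, x = Sum.inr e ∧ y = Sum.inl v ∧ v ∈ H.mem e)
  symm := by
    constructor; rintro x y (⟨v, e, rfl, rfl, h⟩ | ⟨v, e, rfl, rfl, h⟩)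
    · exact Or.inr ⟨v, e, rfl, rfl, h⟩
    · exact Or.inl ⟨v, e, rfl, rfl, h⟩
  loopless := by
    constructor; rintro x (⟨v, e, rfl, h, -⟩ | ⟨v, e, rfl, h, -⟩) <;> exact absurd h (by simp)

/-- `v` and `e` appear consecutively in some trail of the family `F`. -/
def ConsecIn (H : Hypergraph') (F : Set H.Walk) (v : H.V) (e : H.E) : Prop :=
  ∃ W ∈ F, ∃ i : Fin W.k, W.edge i = e ∧ (W.vtx i.castSucc = v ∨ W.vtx i.succ = v)

/-- The spanning subgraph of the incidence graph corresponding to an Euler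
family `F`: its edges are the incident pairs `ve` consecutive in some trail of `F`. -/
def eulerSubgraph (H : Hypergraph') (F : Set H.Walk) : SimpleGraph (H.V ⊕ H.E) where
  Adj x y :=
    (∃ v e, x = Sum.inl v ∧ y = Sum.inr e ∧ H.ConsecIn F v e) ∨
    (∃ v e, x = Sum.inr e ∧ y = Sum.inl v ∧ H.ConsecIn F v e)
  symm := by
    constructor; rintro x y (⟨v, e, rfl, rfl, h⟩ | ⟨v, e, rfl, rfl, h⟩)
    · exact Or.inr ⟨v, e, rfl, rfl, h⟩
    · exact Or.inl ⟨v, e, rfl, rfl, h⟩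
  loopless := by
    constructor; rintro x (⟨v, e, rfl, h, -⟩ | ⟨v, e, rfl, h, -⟩) <;> exact absurd h (by simp)

end Hypergraph'

/-- The degree of a vertex of a simple graph (number of neighbours). -/
noncomputable def sdeg {α : Type*} (G : SimpleGraph α) (x : α) : ℕ :=
  (G.neighborSet x).ncard

/-- A connected component of a simple graph is nontrivial if it contains an edge. -/
def NontrivComp {α : Type*} (G : SimpleGraph α) (c : G.ConnectedComponent) : Prop :=
  ∃ x y, G.Adj x y ∧ G.connectedComponentMk x = c

/-- The number of nontrivial connected components of a simple graph. -/
noncomputable def ntComps {α : Type*} (G : SimpleGraph α) : ℕ :=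
  {c : G.ConnectedComponent | NontrivComp G c}.ncard

/-- A cut vertex of a simple graph: a vertex whose deletion increases the number
of connected components, i.e. some two vertices distinct from it are joined by a
walk but by no walk avoiding it. -/
def IsCutVtx {α : Type*} (G : SimpleGraph α) (v : α) : Prop :=
  ∃ x y, x ≠ v ∧ y ≠ v ∧ G.Reachable x y ∧ ¬ ∃ p : G.Walk x y, v ∉ p.support

/-- An `F`-interchanging cycle: a cycle of the incidence graph such that every
e-vertex on it is incident in `G_F` with exactly one edge of the cycle. -/
def IsInterchanging (H : Hypergraph') (F : Set H.Walk) {x : H.V ⊕ H.E}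
    (C : (H.incidenceGraph).Walk x x) : Prop :=
  C.IsCycle ∧ ∀ e : H.E, (Sum.inr e : H.V ⊕ H.E) ∈ C.support →
    ∃! s : Sym2 (H.V ⊕ H.E),
      s ∈ C.edges ∧ (Sum.inr e : H.V ⊕ H.E) ∈ s ∧ s ∈ (H.eulerSubgraph F).edgeSet

/-- The symmetric difference of a simple graph with a set of potential edges. -/
def symmDiffEdges {α : Type*} (G : SimpleGraph α) (s : Set (Sym2 α)) : SimpleGraph α :=
  SimpleGraph.fromEdgeSet (symmDiff G.edgeSet s)

/-- An `F`-diminishing cycle: an `F`-interchanging cycle `C` such that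
`G_F Δ C` has fewer nontrivial connected components than `G_F`. -/
def IsDiminishing (H : Hypergraph') (F : Set H.Walk) {x : H.V ⊕ H.E}
    (C : (H.incidenceGraph).Walk x x) : Prop :=
  IsInterchanging H F C ∧
    ntComps (symmDiffEdges (H.eulerSubgraph F) {s | s ∈ C.edges}) <
      ntComps (H.eulerSubgraph F)

/-! Write `D = G_F Δ C` and `S` for the union of the components of `G_F` meeting `C`.
Since `S` is a union of `D`-components, it suffices to connect every `D`-edge in `S` to the
e-vertices of `C` and these to each other. Each e-vertex of `C` keeps exactly one of its two
`G_F`-edges once `C` is deleted, and by hypothesis the surviving edges of a component of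
`G_F` stay connected; they are edges of `D`. Two e-vertices `a, c` joined on `C` through a
v-vertex `b` are then linked in `D` by the `C`-edges not in `G_F`, by the surviving edges of
their common component, or, in the mixed case, through a second `G_F`-edge at `b`, which
exists because the trails of `F` are closed. -/

namespace SimpleGraph

variable {α : Type*} {G : SimpleGraph α}

lemma Walk.support_subset_of_adj_closed {s : Set α} (hs : ∀ a b, a ∈ s → G.Adj a b → b ∈ s)
    {u v : α} (p : G.Walk u v) (hu : u ∈ s) : ∀ z ∈ p.support, z ∈ s := by
  induction p with
  | nil => simpa using hu
  | cons h q ih => simpa [hu] using ih (hs _ _ hu h)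

lemma induce_reachable_iff_of_adj_closed {s : Set α} (hs : ∀ a b, a ∈ s → G.Adj a b → b ∈ s)
    {a b : s} : (G.induce s).Reachable a b ↔ G.Reachable a b := by
  refine ⟨fun h => h.map (Embedding.induce s).toHom, fun ⟨p⟩ => ?_⟩
  exact ⟨p.induce s (p.support_subset_of_adj_closed hs a.2)⟩

lemma Walk.IsCycle.exists_mem_edges {x y : α} {C : G.Walk x x} (hC : C.IsCycle)
    (hy : y ∈ C.support) : ∃ z, s(y, z) ∈ C.edges := by
  have hne : (C.toSubgraph.neighborSet y).Nonempty :=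
    Set.nonempty_of_ncard_ne_zero (by simp [hC.ncard_neighborSet_toSubgraph_eq_two hy])
  obtain ⟨z, hz⟩ := hne
  exact ⟨z, Walk.adj_toSubgraph_iff_mem_edges.mp hz⟩

lemma Walk.IsCycle.eq_or_eq_of_mem_edges {x y a b c : α} {C : G.Walk x x} (hC : C.IsCycle)
    (ha : s(y, a) ∈ C.edges) (hb : s(y, b) ∈ C.edges) (hab : a ≠ b)
    (hc : s(y, c) ∈ C.edges) : c = a ∨ c = b := by
  have hsub : ({a, b} : Set α) ⊆ C.toSubgraph.neighborSet y := by
    rintro z (rfl | rfl) <;> exact Walk.adj_toSubgraph_iff_mem_edges.mpr ‹_›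
  have hN2 := hC.ncard_neighborSet_toSubgraph_eq_two (C.fst_mem_support_of_mem_edges ha)
  have hN := Set.eq_of_subset_of_ncard_le hsub (by rw [hN2, Set.ncard_pair hab])
    (Set.finite_of_ncard_ne_zero (by omega))
  have hcN : c ∈ C.toSubgraph.neighborSet y := Walk.adj_toSubgraph_iff_mem_edges.mpr hc
  simpa [← hN] using hcN

lemma Walk.IsTrail.reachable_of_reachable_two_steps {G' : SimpleGraph α} {u v : α}
    {p : G.Walk u v} (hp : p.IsTrail) (P : α → Prop) (hP : ∀ a b, G.Adj a b → (P a ↔ ¬ P b))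
    (hstep : ∀ a b c, s(a, b) ∈ p.edges → s(b, c) ∈ p.edges → s(a, b) ≠ s(b, c) →
      P a → P c → G'.Reachable a c) :
    ∀ a ∈ p.support, ∀ c ∈ p.support, P a → P c → G'.Reachable a c := by
  induction p with
  | nil =>
    intro a ha c hc _ _
    simp only [Walk.support_nil, List.mem_singleton] at ha hc
    rw [ha, hc]
  | @cons u w v huw q ih =>
    rw [Walk.isTrail_cons] at hp
    have ih := ih hp.1 fun a b c hab hbc => hstep a b c (by simp [hab]) (by simp [hbc])
    have hu : P u → ∀ c ∈ q.support, P c → G'.Reachable u c := by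
      intro hPu c hc hPc
      have hPw : ¬ P w := (hP u w huw).mp hPu
      cases q with
      | nil => simp_all
      | @cons _ d _ hwd r =>
        have hPd : P d := not_not.mp (mt (hP w d hwd).mpr hPw)
        have hud : G'.Reachable u d :=
          hstep u w d (by simp) (by simp) (fun h => hp.2 (by simp [h])) hPu hPd
        rcases List.mem_cons.mp (by simpa using hc) with rfl | hc
        · exact absurd hPc hPw
        · exact hud.trans (ih d (by simp) c (by simp [hc]) hPd hPc)
    intro a ha c hc hPa hPc
    rw [Walk.support_cons, List.mem_cons] at ha hc
    rcases ha with rfl | ha <;> rcases hc with rfl | hc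
    · rfl
    · exact hu hPa c hc hPc
    · exact (hu hPc a ha hPa).symm
    · exact ih a ha c hc hPa hPc

end SimpleGraph

open SimpleGraph

section Components

variable {α : Type*} {G : SimpleGraph α}

lemma symmDiffEdges_adj {s : Set (Sym2 α)} {a b : α} :
    (symmDiffEdges G s).Adj a b ↔
      ((G.Adj a b ∧ s(a, b) ∉ s) ∨ (s(a, b) ∈ s ∧ ¬ G.Adj a b)) ∧ a ≠ b := by
  simp [symmDiffEdges, Set.mem_symmDiff]

lemma deleteEdges_le_symmDiffEdges (s : Set (Sym2 α)) : G.deleteEdges s ≤ symmDiffEdges G s :=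
  fun _ _ h => symmDiffEdges_adj.mpr ⟨Or.inl (deleteEdges_adj.mp h), h.ne⟩

lemma ntComps_le_one_of_reachable
    (h : ∀ a b a' b', G.Adj a b → G.Adj a' b' → G.Reachable a a') : ntComps G ≤ 1 := by
  have hsub : {c : G.ConnectedComponent | NontrivComp G c}.Subsingleton := by
    rintro _ ⟨a, b, hab, rfl⟩ _ ⟨a', b', hab', rfl⟩
    exact ConnectedComponent.sound (h a b a' b' hab hab')
  exact (Set.ncard_le_one hsub.finite).mpr fun _ hc _ hc' => hsub hc hc'

lemma reachable_of_ntComps_le_one [Finite α] (h : ntComps G ≤ 1) {a b a' b' : α}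
    (hab : G.Adj a b) (hab' : G.Adj a' b') : G.Reachable a a' :=
  ConnectedComponent.exact <| (Set.ncard_le_one_iff).mp h ⟨a, b, hab, rfl⟩ ⟨a', b', hab', rfl⟩

lemma ntComps_induce_le_one_of_reachable {s : Set α} (hs : ∀ a b, a ∈ s → G.Adj a b → b ∈ s)
    (h : ∀ a b a' b', a ∈ s → a' ∈ s → G.Adj a b → G.Adj a' b' → G.Reachable a a') :
    ntComps (G.induce s) ≤ 1 :=
  ntComps_le_one_of_reachable fun a b a' b' hab hab' =>
    (induce_reachable_iff_of_adj_closed hs).mpr (h a b a' b' a.2 a'.2 hab hab')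

lemma reachable_of_ntComps_induce_le_one [Finite α] {s : Set α}
    (hs : ∀ a b, a ∈ s → G.Adj a b → b ∈ s) (h : ntComps (G.induce s) ≤ 1) {a b a' b' : α}
    (ha : a ∈ s) (ha' : a' ∈ s) (hab : G.Adj a b) (hab' : G.Adj a' b') : G.Reachable a a' :=
  (induce_reachable_iff_of_adj_closed hs (a := ⟨a, ha⟩) (b := ⟨a', ha'⟩)).mp <|
    reachable_of_ntComps_le_one h (a := ⟨a, ha⟩) (b := ⟨b, hs a b ha hab⟩)
      (a' := ⟨a', ha'⟩) (b' := ⟨b', hs a' b' ha' hab'⟩) hab hab'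

lemma reachable_deleteEdges_of_ntComps_le_one [Finite α] {s : Set (Sym2 α)} {a b a' b' : α}
    (h : ntComps ((G.deleteEdges s).induce
      {z | G.connectedComponentMk z = G.connectedComponentMk a}) ≤ 1)
    (haa' : G.Reachable a a') (hab : (G.deleteEdges s).Adj a b)
    (hab' : (G.deleteEdges s).Adj a' b') : (G.deleteEdges s).Reachable a a' :=
  reachable_of_ntComps_induce_le_one
    (fun _ _ hz hzw => (ConnectedComponent.connectedComponentMk_eq_of_adj
      (deleteEdges_adj.mp hzw).1).symm.trans hz)
    h rfl (ConnectedComponent.sound haa'.symm) hab hab'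

end Components

lemma apply_succ_eq_apply_castSucc_finRotate {β : Type*} {k : ℕ} {f : Fin (k + 1) → β}
    (hf : f 0 = f (Fin.last k)) (i : Fin k) : f i.succ = f (finRotate k i).castSucc := by
  cases k with
  | zero => exact i.elim0
  | succ n =>
    by_cases hi : i = Fin.last n
    · subst hi
      simp [← hf]
    · congr 1
      ext
      simp [Fin.val_add_one, hi]

lemma finRotate_apply_ne {k : ℕ} (hk : 2 ≤ k) (i : Fin k) : finRotate k i ≠ i := by
  obtain ⟨n, rfl⟩ : ∃ n, k = n + 2 := ⟨k - 2, by omega⟩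
  exact Equiv.Perm.mem_support.mp (by simp [support_finRotate])

namespace Hypergraph'

variable {H : Hypergraph'} {F : Set H.Walk}

lemma incidenceGraph_adj_isRight_iff {a b : H.V ⊕ H.E} (h : H.incidenceGraph.Adj a b) :
    a.isRight ↔ ¬ b.isRight := by
  rcases h with ⟨v, e, rfl, rfl, -⟩ | ⟨v, e, rfl, rfl, -⟩ <;> simp

lemma eulerSubgraph_le_incidenceGraph : H.eulerSubgraph F ≤ H.incidenceGraph := by
  have hmem {v : H.V} {e : H.E} : H.ConsecIn F v e → v ∈ H.mem e := by
    rintro ⟨W, -, i, rfl, rfl | rfl⟩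
    exacts [W.mem_left i, W.mem_right i]
  rintro _ _ (⟨v, e, rfl, rfl, h⟩ | ⟨v, e, rfl, rfl, h⟩)
  exacts [Or.inl ⟨v, e, rfl, rfl, hmem h⟩, Or.inr ⟨v, e, rfl, rfl, hmem h⟩]

lemma ConsecIn.exists_ne_vertex {v : H.V} {e : H.E} (h : H.ConsecIn F v e) :
    ∃ w ≠ v, H.ConsecIn F w e := by
  obtain ⟨W, hW, i, rfl, rfl | rfl⟩ := h
  · exact ⟨W.vtx i.succ, (W.ne i).symm, W, hW, i, rfl, Or.inr rfl⟩
  · exact ⟨W.vtx i.castSucc, W.ne i, W, hW, i, rfl, Or.inl rfl⟩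

/-- In a closed trail the anchor shared by two cyclically consecutive steps lies on two
distinct edges. -/
lemma ConsecIn.exists_ne_edge (hF : ∀ W ∈ F, W.IsClosedTrail) {v : H.V} {e : H.E}
    (h : H.ConsecIn F v e) : ∃ e' ≠ e, H.ConsecIn F v e' := by
  obtain ⟨W, hW, i, rfl, hv⟩ := h
  obtain ⟨hinj, hclosed, hk⟩ := hF W hW
  have hrot := apply_succ_eq_apply_castSucc_finRotate hclosed
  rcases hv with rfl | rfl
  · set j := (finRotate W.k).symm i
    have hj : finRotate W.k j = i := Equiv.apply_symm_apply _ i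
    have hji : j ≠ i := fun h => finRotate_apply_ne hk j (hj.trans h.symm)
    exact ⟨W.edge j, hinj.ne hji, W, hW, j, rfl, Or.inr (by rw [hrot, hj])⟩
  · exact ⟨W.edge (finRotate W.k i), hinj.ne (finRotate_apply_ne hk i), W, hW, _, rfl,
      Or.inl (hrot i).symm⟩

lemma eulerSubgraph_exists_adj_ne (hF : ∀ W ∈ F, W.IsClosedTrail) {y z : H.V ⊕ H.E}
    (h : (H.eulerSubgraph F).Adj y z) : ∃ w ≠ z, (H.eulerSubgraph F).Adj y w := by
  rcases h with ⟨v, e, rfl, rfl, h⟩ | ⟨v, e, rfl, rfl, h⟩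
  · obtain ⟨e', he', h'⟩ := h.exists_ne_edge hF
    exact ⟨Sum.inr e', by simpa using he', Or.inl ⟨v, e', rfl, rfl, h'⟩⟩
  · obtain ⟨w, hw, h'⟩ := h.exists_ne_vertex
    exact ⟨Sum.inl w, by simpa using hw, Or.inr ⟨w, e, rfl, rfl, h'⟩⟩

def IsCycleDeletionConnected (H : Hypergraph') (F : Set H.Walk) {x : H.V ⊕ H.E}
    (C : H.incidenceGraph.Walk x x) : Prop :=
  ∀ c : (H.eulerSubgraph F).ConnectedComponent,
    (∃ y ∈ C.support, (H.eulerSubgraph F).connectedComponentMk y = c) →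
    ntComps (((H.eulerSubgraph F).deleteEdges {s | s ∈ C.edges}).induce
      {z | (H.eulerSubgraph F).connectedComponentMk z = c}) ≤ 1

variable {x : H.V ⊕ H.E} {C : H.incidenceGraph.Walk x x}

lemma symmDiffEdges_adj_of_mem_edges {a b : H.V ⊕ H.E} (hab : s(a, b) ∈ C.edges)
    (habF : ¬ (H.eulerSubgraph F).Adj a b) :
    (symmDiffEdges (H.eulerSubgraph F) {s | s ∈ C.edges}).Adj a b :=
  symmDiffEdges_adj.mpr ⟨Or.inr ⟨hab, habF⟩, (C.adj_of_mem_edges hab).ne⟩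

/-- The e-vertex `a` has degree two in `G_F`, and only one of its two edges lies on `C`. -/
lemma exists_deleteEdges_adj_of_mem_support (hF : ∀ W ∈ F, W.IsClosedTrail)
    (hC : IsInterchanging H F C) {a : H.V ⊕ H.E} (ha : a ∈ C.support) (haR : a.isRight) :
    ∃ b, ((H.eulerSubgraph F).deleteEdges {s | s ∈ C.edges}).Adj a b := by
  obtain ⟨e, rfl⟩ := Sum.isRight_iff.mp haR
  obtain ⟨_, ⟨-, hes, hsF⟩, huniq⟩ := hC.2 e ha
  obtain ⟨z, rfl⟩ := Sym2.mem_iff_exists.mp hes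
  obtain ⟨w, hwz, hw⟩ := eulerSubgraph_exists_adj_ne hF hsF
  exact ⟨w, SimpleGraph.deleteEdges_adj.mpr
    ⟨hw, fun hwC => hwz (Sym2.congr_right.mp (huniq _ ⟨hwC, by simp, hw⟩))⟩⟩

lemma reachable_symmDiffEdges_of_reachable (hyp : IsCycleDeletionConnected H F C)
    {y a a' b b' : H.V ⊕ H.E} (hy : y ∈ C.support) (hay : (H.eulerSubgraph F).Reachable a y)
    (haa' : (H.eulerSubgraph F).Reachable a a')
    (hab : ((H.eulerSubgraph F).deleteEdges {s | s ∈ C.edges}).Adj a b)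
    (hab' : ((H.eulerSubgraph F).deleteEdges {s | s ∈ C.edges}).Adj a' b') :
    (symmDiffEdges (H.eulerSubgraph F) {s | s ∈ C.edges}).Reachable a a' :=
  (reachable_deleteEdges_of_ntComps_le_one
    (hyp _ ⟨y, hy, SimpleGraph.ConnectedComponent.sound hay.symm⟩) haa' hab hab').mono
    (deleteEdges_le_symmDiffEdges _)

/-- The middle vertex `b` has a second edge in `G_F`, which cannot lie on `C`. -/
lemma reachable_of_mem_edges_of_adj_of_not_adj (hF : ∀ W ∈ F, W.IsClosedTrail)
    (hC : IsInterchanging H F C) (hyp : IsCycleDeletionConnected H F C) {a b c : H.V ⊕ H.E}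
    (hab : s(a, b) ∈ C.edges) (hbc : s(b, c) ∈ C.edges) (hne : s(a, b) ≠ s(b, c))
    (haR : a.isRight) (habF : (H.eulerSubgraph F).Adj a b)
    (hbcF : ¬ (H.eulerSubgraph F).Adj b c) :
    (symmDiffEdges (H.eulerSubgraph F) {s | s ∈ C.edges}).Reachable a c := by
  have haC : a ∈ C.support := C.fst_mem_support_of_mem_edges hab
  obtain ⟨a', ha'⟩ := exists_deleteEdges_adj_of_mem_support hF hC haC haR
  obtain ⟨w, hwa, hbw⟩ := eulerSubgraph_exists_adj_ne hF habF.symm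
  have hac : a ≠ c := by
    rintro rfl
    exact hne Sym2.eq_swap
  have hbwC : s(b, w) ∉ C.edges := fun hbwC =>
    (hC.1.eq_or_eq_of_mem_edges (by rwa [Sym2.eq_swap]) hbc hac hbwC).elim hwa
      fun hwc => hbcF (hwc ▸ hbw)
  exact (reachable_symmDiffEdges_of_reachable hyp haC .rfl habF.reachable ha'
    (SimpleGraph.deleteEdges_adj.mpr ⟨hbw, hbwC⟩)).trans
    (symmDiffEdges_adj_of_mem_edges hbc hbcF).reachable

lemma reachable_of_mem_edges (hF : ∀ W ∈ F, W.IsClosedTrail) (hC : IsInterchanging H F C)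
    (hyp : IsCycleDeletionConnected H F C) {a b c : H.V ⊕ H.E}
    (hab : s(a, b) ∈ C.edges) (hbc : s(b, c) ∈ C.edges) (hne : s(a, b) ≠ s(b, c))
    (haR : a.isRight) (hcR : c.isRight) :
    (symmDiffEdges (H.eulerSubgraph F) {s | s ∈ C.edges}).Reachable a c := by
  by_cases habF : (H.eulerSubgraph F).Adj a b <;> by_cases hbcF : (H.eulerSubgraph F).Adj b c
  · have haC := C.fst_mem_support_of_mem_edges hab
    obtain ⟨a', ha'⟩ := exists_deleteEdges_adj_of_mem_support hF hC haC haR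
    obtain ⟨c', hc'⟩ :=
      exists_deleteEdges_adj_of_mem_support hF hC (C.snd_mem_support_of_mem_edges hbc) hcR
    exact reachable_symmDiffEdges_of_reachable hyp haC .rfl
      (habF.reachable.trans hbcF.reachable) ha' hc'
  · exact reachable_of_mem_edges_of_adj_of_not_adj hF hC hyp hab hbc hne haR habF hbcF
  · refine (reachable_of_mem_edges_of_adj_of_not_adj hF hC hyp ?_ ?_ ?_ hcR hbcF.symm
      fun h => habF h.symm).symm
    · rwa [Sym2.eq_swap]
    · rwa [Sym2.eq_swap]
    · rwa [Sym2.eq_swap, ne_comm, Sym2.eq_swap]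
  · exact (symmDiffEdges_adj_of_mem_edges hab habF).reachable.trans
      (symmDiffEdges_adj_of_mem_edges hbc hbcF).reachable

lemma reachable_of_mem_support (hF : ∀ W ∈ F, W.IsClosedTrail) (hC : IsInterchanging H F C)
    (hyp : IsCycleDeletionConnected H F C) {a c : H.V ⊕ H.E} (ha : a ∈ C.support)
    (hc : c ∈ C.support) (haR : a.isRight) (hcR : c.isRight) :
    (symmDiffEdges (H.eulerSubgraph F) {s | s ∈ C.edges}).Reachable a c :=
  hC.1.isCircuit.isTrail.reachable_of_reachable_two_steps (fun z => z.isRight)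
    (fun _ _ h => incidenceGraph_adj_isRight_iff h)
    (fun _ _ _ hab hbc hne haR hcR => reachable_of_mem_edges hF hC hyp hab hbc hne haR hcR)
    a ha c hc haR hcR

lemma exists_reachable_of_deleteEdges_adj (hF : ∀ W ∈ F, W.IsClosedTrail)
    (hC : IsInterchanging H F C) (hyp : IsCycleDeletionConnected H F C) {a b y : H.V ⊕ H.E}
    (hy : y ∈ C.support) (hay : (H.eulerSubgraph F).Reachable a y)
    (hab : ((H.eulerSubgraph F).deleteEdges {s | s ∈ C.edges}).Adj a b) :
    ∃ c ∈ C.support, c.isRight ∧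
      (symmDiffEdges (H.eulerSubgraph F) {s | s ∈ C.edges}).Reachable a c := by
  have of_isRight : ∀ c ∈ C.support, c.isRight → (H.eulerSubgraph F).Reachable a c →
      ∃ c ∈ C.support, c.isRight ∧
        (symmDiffEdges (H.eulerSubgraph F) {s | s ∈ C.edges}).Reachable a c := by
    intro c hc hcR hac
    obtain ⟨c', hc'⟩ := exists_deleteEdges_adj_of_mem_support hF hC hc hcR
    exact ⟨c, hc, hcR, reachable_symmDiffEdges_of_reachable hyp hc hac hac hab hc'⟩
  by_cases hyR : y.isRight
  · exact of_isRight y hy hyR hay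
  by_cases hyF : ∃ z, s(y, z) ∈ C.edges ∧ (H.eulerSubgraph F).Adj y z
  · obtain ⟨z, hz, hyz⟩ := hyF
    refine of_isRight z (C.snd_mem_support_of_mem_edges hz) ?_ (hay.trans hyz.reachable)
    simpa [hyR] using incidenceGraph_adj_isRight_iff (eulerSubgraph_le_incidenceGraph hyz)
  simp only [not_exists, not_and] at hyF
  obtain ⟨z, hz⟩ := hC.1.exists_mem_edges hy
  have hzR : z.isRight := by
    simpa [hyR] using incidenceGraph_adj_isRight_iff (C.adj_of_mem_edges hz)
  have hay' : (symmDiffEdges (H.eulerSubgraph F) {s | s ∈ C.edges}).Reachable a y := by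
    obtain rfl | hne := eq_or_ne a y
    · rfl
    obtain ⟨p⟩ := hay.symm
    have hyw := p.adj_snd (SimpleGraph.Walk.not_nil_of_ne hne.symm)
    exact reachable_symmDiffEdges_of_reachable hyp hy hay hay hab
      (SimpleGraph.deleteEdges_adj.mpr ⟨hyw, (hyF _ · hyw)⟩)
  exact ⟨z, C.snd_mem_support_of_mem_edges hz, hzR,
    hay'.trans (symmDiffEdges_adj_of_mem_edges hz (hyF z hz)).reachable⟩

lemma exists_reachable_of_symmDiffEdges_adj (hF : ∀ W ∈ F, W.IsClosedTrail)
    (hC : IsInterchanging H F C) (hyp : IsCycleDeletionConnected H F C) {a b : H.V ⊕ H.E}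
    (ha : ∃ y ∈ C.support, (H.eulerSubgraph F).Reachable a y)
    (hab : (symmDiffEdges (H.eulerSubgraph F) {s | s ∈ C.edges}).Adj a b) :
    ∃ c ∈ C.support, c.isRight ∧
      (symmDiffEdges (H.eulerSubgraph F) {s | s ∈ C.edges}).Reachable a c := by
  rcases (symmDiffEdges_adj.mp hab).1 with ⟨habF, habC⟩ | ⟨habC, -⟩
  · obtain ⟨y, hy, hay⟩ := ha
    exact exists_reachable_of_deleteEdges_adj hF hC hyp hy hay
      (SimpleGraph.deleteEdges_adj.mpr ⟨habF, habC⟩)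
  by_cases haR : a.isRight
  · exact ⟨a, C.fst_mem_support_of_mem_edges habC, haR, .rfl⟩
  · refine ⟨b, C.snd_mem_support_of_mem_edges habC, ?_, hab.reachable⟩
    simpa [haR] using incidenceGraph_adj_isRight_iff (C.adj_of_mem_edges habC)

lemma mem_of_symmDiffEdges_adj {a b : H.V ⊕ H.E}
    (ha : ∃ y ∈ C.support, (H.eulerSubgraph F).Reachable a y)
    (hab : (symmDiffEdges (H.eulerSubgraph F) {s | s ∈ C.edges}).Adj a b) :
    ∃ y ∈ C.support, (H.eulerSubgraph F).Reachable b y := by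
  rcases (symmDiffEdges_adj.mp hab).1 with ⟨habF, -⟩ | ⟨habC, -⟩
  · obtain ⟨y, hy, hay⟩ := ha
    exact ⟨y, hy, habF.symm.reachable.trans hay⟩
  · exact ⟨b, C.snd_mem_support_of_mem_edges habC, .rfl⟩

end Hypergraph'

/-- Lemma 4.7: let `C` be an `F`-interchanging cycle, and suppose that for each
connected component of `G_F` meeting `C`, deleting the edges of `C` from that
component leaves at most one nontrivial connected component. Then the subgraph
of `G_F Δ C` induced by the union of the vertex sets of the components of `G_F`
meeting `C` has at most one nontrivial connected component. -/
theorem symmDiff_induce_ntComps_le_one (H : Hypergraph') (F : Set H.Walk)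
    (hF : H.IsEulerFamily F) {x : H.V ⊕ H.E} (C : (H.incidenceGraph).Walk x x)
    (hC : IsInterchanging H F C)
    (hyp : ∀ c : (H.eulerSubgraph F).ConnectedComponent,
      (∃ y ∈ C.support, (H.eulerSubgraph F).connectedComponentMk y = c) →
      ntComps (((H.eulerSubgraph F).deleteEdges {s | s ∈ C.edges}).induce
        {z | (H.eulerSubgraph F).connectedComponentMk z = c}) ≤ 1) :
    ntComps ((symmDiffEdges (H.eulerSubgraph F) {s | s ∈ C.edges}).induce
      {z | ∃ y ∈ C.support, (H.eulerSubgraph F).Reachable z y}) ≤ 1 := by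
  refine ntComps_induce_le_one_of_reachable (fun _ _ => Hypergraph'.mem_of_symmDiffEdges_adj)
    fun a b a' b' ha ha' hab hab' => ?_
  obtain ⟨c, hc, hcR, hac⟩ := Hypergraph'.exists_reachable_of_symmDiffEdges_adj hF.1 hC hyp ha hab
  obtain ⟨c', hc', hc'R, hac'⟩ := Hypergraph'.exists_reachable_of_symmDiffEdges_adj hF.1 hC hyp ha' hab'
  exact hac.trans ((Hypergraph'.reachable_of_mem_support hF.1 hC hyp hc hc' hcR hc'R).trans hac'.symm)
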